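/- Let X be a reflexive real Banach space and let {(x_n, f_n)}_{n∈ℕ} be a Hilbert-Schauder frame of X with Hilbert-Schauder frame operator S. Then the range S(X) is norm-dense in X*, and for every f ∈ X* the partial sums Σ_{j≤N} f(x_j) f_j converge in the norm of X* to f. -/

import Mathlib

/-!
Let `P N = ∑_{j<N} f j ⊗ x j` be the partial sum operators of the frame. They tend to the identity
pointwise, so they are uniformly bounded by Banach–Steinhaus, and the expansion of `g ∈ X*` is
`g ∘ P N`, again uniformly bounded in `N`. Hence it suffices to prove convergence on a dense set.
On the range of `S` it holds because `S` is symmetric (`S v w = lim ∑_{j<N} f j v * f j w`), which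
gives `S v ∘ P N = S (P N v) → S v`. The range is dense by Hahn–Banach: by reflexivity a functional
on `X*` annihilating it is evaluation at some `w` with `f j w = S (x j) w = 0` for all `j`, so
`w = 0`.
-/

open Filter Topology

def SchauderFrame {X : Type*} [NormedAddCommGroup X] [NormedSpace ℝ X]
    (x : ℕ → X) (f : ℕ → X →L[ℝ] ℝ) : Prop :=
  ∀ v : X, Tendsto (fun N => ∑ j ∈ Finset.range N, f j v • x j) atTop (𝓝 v)

theorem Submodule.dense_of_forall_dual_eq_zero {E : Type*} [AddCommGroup E] [Module ℝ E]
    [TopologicalSpace E] [IsTopologicalAddGroup E] [ContinuousSMul ℝ E] [LocallyConvexSpace ℝ E]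
    (p : Submodule ℝ E) (h : ∀ Φ : E →L[ℝ] ℝ, (∀ a ∈ p, Φ a = 0) → Φ = 0) :
    Dense (p : Set E) := by
  by_contra hp
  obtain ⟨y, hy⟩ := (Set.ne_univ_iff_exists_notMem _).1 (dense_iff_closure_eq.not.1 hp)
  rw [← p.topologicalClosure_coe] at hy
  obtain ⟨Φ, u, hlt, hu⟩ := geometric_hahn_banach_closed_point
    p.topologicalClosure.convex p.isClosed_topologicalClosure hy
  have hΦ : ∀ a ∈ p, Φ a = 0 := by
    intro a ha
    by_contra hne
    have := hlt ((u / Φ a) • a) (p.le_topologicalClosure (p.smul_mem _ ha))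
    rw [map_smul, smul_eq_mul, div_mul_cancel₀ _ hne] at this
    exact this.false
  have h0 := hlt 0 (zero_mem _)
  rw [h Φ hΦ, zero_apply] at h0 hu
  exact (h0.trans hu).false

theorem LinearMap.denseRange_of_reflexive {X Y : Type*} [NormedAddCommGroup X] [NormedSpace ℝ X]
    [AddCommGroup Y] [Module ℝ Y]
    (hrefl : Function.Surjective (NormedSpace.inclusionInDoubleDual ℝ X))
    (S : Y →ₗ[ℝ] X →L[ℝ] ℝ) (hS : ∀ w : X, (∀ v, S v w = 0) → w = 0) :
    DenseRange S := by
  rw [DenseRange, ← LinearMap.coe_range]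
  refine (LinearMap.range S).dense_of_forall_dual_eq_zero fun Φ hΦ => ?_
  obtain ⟨w, rfl⟩ := hrefl Φ
  rw [hS w fun v => hΦ _ ⟨v, rfl⟩, map_zero]

theorem ContinuousLinearMap.tendsto_apply_of_dense {𝕜 E F ι : Type*}
    [NontriviallyNormedField 𝕜] [NormedAddCommGroup E] [NormedSpace 𝕜 E]
    [NormedAddCommGroup F] [NormedSpace 𝕜 F] {l : Filter ι} {T : ι → E →L[𝕜] F}
    {A : E →L[𝕜] F} (hT : ∃ C, ∀ i, ‖T i‖ ≤ C) {s : Set E} (hs : Dense s)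
    (h : ∀ y ∈ s, Tendsto (fun i => T i y) l (𝓝 (A y))) (y : E) :
    Tendsto (fun i => T i y) l (𝓝 (A y)) :=
  have hT : Equicontinuous ((↑) ∘ T) := ((NormedSpace.equicontinuous_TFAE T).out 5 1).1 hT
  (hT.isClosed_setOfPred_tendsto A.continuous).closure_subset_iff.2 h (hs y)

namespace SchauderFrame

variable {X : Type*} [NormedAddCommGroup X] [NormedSpace ℝ X] {x : ℕ → X}
  {f : ℕ → X →L[ℝ] ℝ}

noncomputable def partialSum (x : ℕ → X) (f : ℕ → X →L[ℝ] ℝ) (N : ℕ) : X →L[ℝ] X :=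
  ∑ j ∈ Finset.range N, (f j).smulRight (x j)

@[simp]
theorem partialSum_apply (N : ℕ) (v : X) :
    partialSum x f N v = ∑ j ∈ Finset.range N, f j v • x j := by
  simp [partialSum]

noncomputable def dualPartialSum (x : ℕ → X) (f : ℕ → X →L[ℝ] ℝ) (N : ℕ) :
    (X →L[ℝ] ℝ) →L[ℝ] X →L[ℝ] ℝ :=
  (ContinuousLinearMap.compL ℝ X X ℝ).flip (partialSum x f N)

theorem dualPartialSum_apply (N : ℕ) (g : X →L[ℝ] ℝ) :
    dualPartialSum x f N g = ∑ j ∈ Finset.range N, g (x j) • f j := by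
  ext v
  simp [dualPartialSum, mul_comm]

theorem norm_dualPartialSum_le (N : ℕ) : ‖dualPartialSum x f N‖ ≤ ‖partialSum x f N‖ :=
  ContinuousLinearMap.opNorm_le_bound _ (norm_nonneg _) fun g =>
    (g.opNorm_comp_le _).trans_eq (mul_comm _ _)

theorem tendsto_partialSum (h : SchauderFrame x f) (v : X) :
    Tendsto (fun N => partialSum x f N v) atTop (𝓝 v) := by
  simpa using h v

theorem exists_norm_partialSum_le [CompleteSpace X] (h : SchauderFrame x f) :
    ∃ C, ∀ N, ‖partialSum x f N‖ ≤ C :=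
  banach_steinhaus fun v =>
    let ⟨C, hC⟩ := (h.tendsto_partialSum v).norm.bddAbove_range
    ⟨C, fun N => hC ⟨N, rfl⟩⟩

theorem eq_zero_of_forall_apply_eq_zero (h : SchauderFrame x f) {w : X}
    (hw : ∀ j, f j w = 0) : w = 0 :=
  tendsto_nhds_unique (h w) (by simp [hw])

section HSfOperator

variable {S : X →L[ℝ] X →L[ℝ] ℝ}

theorem hsf_partialSum_apply (hS : ∀ j, S (x j) = f j) (N : ℕ) (v w : X) :
    S (partialSum x f N v) w = ∑ j ∈ Finset.range N, f j v * f j w := by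
  simp [hS]

theorem hsf_apply_comm (hS : ∀ j, S (x j) = f j) (h : SchauderFrame x f) (v w : X) :
    S v w = S w v := by
  have hlim : ∀ v w, Tendsto (fun N => S (partialSum x f N v) w) atTop (𝓝 (S v w)) :=
    fun v w => ((S.flip w).continuous.tendsto v).comp (h.tendsto_partialSum v)
  refine tendsto_nhds_unique (hlim v w) ?_
  simpa only [hsf_partialSum_apply hS, mul_comm] using hlim w v

theorem dualPartialSum_hsf_apply (hS : ∀ j, S (x j) = f j) (h : SchauderFrame x f) (N : ℕ)
    (v : X) :
    dualPartialSum x f N (S v) = S (partialSum x f N v) := by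
  ext w
  simp_rw [dualPartialSum_apply, sum_apply, hsf_partialSum_apply hS, smul_apply,
    hsf_apply_comm hS h v, hS, smul_eq_mul]

end HSfOperator

end SchauderFrame

/-- If `X` is reflexive (the canonical embedding into the double dual is surjective)
and `{(xₙ, fₙ)}` is a Hilbert-Schauder frame of `X` with HSf-operator `S`, then
`S` has norm-dense range in `X*` and every `f ∈ X*` satisfies
`f = ∑ⱼ f(xⱼ) fⱼ` in the norm of `X*`. -/
theorem hsf_reflexive_dense_range
    {X : Type*} [NormedAddCommGroup X] [NormedSpace ℝ X] [CompleteSpace X]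
    (hrefl : Function.Surjective (NormedSpace.inclusionInDoubleDual ℝ X))
    (x : ℕ → X) (f : ℕ → X →L[ℝ] ℝ) (hframe : SchauderFrame x f)
    (S : X →L[ℝ] X →L[ℝ] ℝ) (hS : ∀ j, S (x j) = f j) :
    DenseRange (fun v : X => S v) ∧
    ∀ g : X →L[ℝ] ℝ,
      Tendsto (fun N => ∑ j ∈ Finset.range N, g (x j) • f j) atTop (𝓝 g) := by
  have hdense : DenseRange (fun v : X => S v) :=
    LinearMap.denseRange_of_reflexive hrefl S.toLinearMap fun w hw =>
      hframe.eq_zero_of_forall_apply_eq_zero fun j => hS j ▸ hw (x j)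
  refine ⟨hdense, fun g => ?_⟩
  obtain ⟨C, hC⟩ := hframe.exists_norm_partialSum_le
  simp_rw [← SchauderFrame.dualPartialSum_apply]
  refine ContinuousLinearMap.tendsto_apply_of_dense (A := .id ℝ _)
    ⟨C, fun N => (SchauderFrame.norm_dualPartialSum_le N).trans (hC N)⟩ hdense ?_ g
  rintro _ ⟨v, rfl⟩
  simp_rw [SchauderFrame.dualPartialSum_hsf_apply hS hframe]
  exact S.continuous.continuousAt.tendsto.comp (hframe.tendsto_partialSum v)
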